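/- Let C be a satisfiable set of conditionals and let 𝔯 be a finite nonempty set of ranked models of C. Then the ranked union R^𝔯 of 𝔯 is a ranked model of C, and R^𝔯 ≺_LM R for every R ∈ 𝔯 with R ≠ R^𝔯. -/

import Mathlib

attribute [local instance] Classical.propDecidable

universe u

/-- Sentences of Propositional Typicality Logic over atoms `P`. -/
inductive PTL (P : Type u) : Type u
  | atom : P → PTL P
  | neg  : PTL P → PTL P
  | conj : PTL P → PTL P → PTL P
  | top  : PTL P
  | bot  : PTL P
  | typ  : PTL P → PTL P

namespace PTL

/-- Material implication, defined from `¬` and `∧`. -/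
def impl {P : Type u} (a b : PTL P) : PTL P := neg (conj a (neg b))

/-- Disjunction, defined from `¬` and `∧`. -/
def disj {P : Type u} (a b : PTL P) : PTL P := neg (conj (neg a) (neg b))

/-- Purely propositional sentences: no occurrence of the typicality operator. -/
def IsProp {P : Type u} : PTL P → Prop
  | atom _ => True
  | neg a => IsProp a
  | conj a b => IsProp a ∧ IsProp b
  | top => True
  | bot => True
  | typ _ => False

end PTL

/-- Propositional valuations. -/
abbrev Val (P : Type u) := P → Bool

/-- Satisfaction of a PTL sentence by a valuation, relative to a ranking
function `rho : Val P → ℕ∞`. -/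
def satR {P : Type u} (rho : Val P → ℕ∞) : Val P → PTL P → Prop
  | v, PTL.atom p => v p = true
  | v, PTL.neg a => ¬ satR rho v a
  | v, PTL.conj a b => satR rho v a ∧ satR rho v b
  | _, PTL.top => True
  | _, PTL.bot => False
  | v, PTL.typ a => satR rho v a ∧ ∀ v', rho v' < rho v → ¬ satR rho v' a

/-- The convexity property of ranking functions. -/
def RkConvex {P : Type u} (rho : Val P → ℕ∞) : Prop :=
  ∀ (v : Val P) (i : ℕ), rho v = (i : ℕ∞) → ∀ j : ℕ, j < i → ∃ v', rho v' = (j : ℕ∞)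

/-- A ranked interpretation: a convex ranking function on valuations. -/
structure RankedInterp (P : Type u) where
  rk : Val P → ℕ∞
  convex : RkConvex rk

/-- `rho` is a ranked model of `a`: every possible valuation satisfies `a`. -/
def modelsR {P : Type u} (rho : Val P → ℕ∞) (a : PTL P) : Prop :=
  ∀ v, rho v < ⊤ → satR rho v a

/-- `R ⊨ a`. -/
def RankedInterp.models {P : Type u} (R : RankedInterp P) (a : PTL P) : Prop :=
  modelsR R.rk a

/-- `R` is a ranked model of the knowledge base `K`. -/
def modelsSet {P : Type u} (R : RankedInterp P) (K : Set (PTL P)) : Prop :=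
  ∀ a ∈ K, R.models a

/-- Ranked entailment consequences of `K`. -/
def Cn0 {P : Type u} (K : Set (PTL P)) : Set (PTL P) :=
  {a | ∀ R : RankedInterp P, modelsSet R K → R.models a}

/-- `rho` satisfies the conditional `a |~ b`: every `≺`-minimal possible
`a`-valuation satisfies `b`. -/
def condSatRho {P : Type u} (rho : Val P → ℕ∞) (a b : PTL P) : Prop :=
  ∀ v, rho v < ⊤ → satR rho v a →
    (∀ u, rho u < ⊤ → satR rho u a → ¬ rho u < rho v) → satR rho v b

/-- The cell of rank `i` of a ranking function. -/
def cell {P : Type u} (rho : Val P → ℕ∞) (i : ℕ∞) : Set (Val P) :=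
  {u | rho u = i}

/-- The LM preference `⪯_LM` on ranking functions: either all cells coincide,
or the cell of the first differing (finite) rank shrinks. -/
def LMle {P : Type u} (rho1 rho2 : Val P → ℕ∞) : Prop :=
  (∀ i : ℕ∞, cell rho1 i = cell rho2 i) ∨
  ∃ j : ℕ, (∀ k : ℕ, k < j → cell rho1 (k : ℕ∞) = cell rho2 (k : ℕ∞)) ∧
    cell rho1 (j : ℕ∞) ≠ cell rho2 (j : ℕ∞) ∧ cell rho2 (j : ℕ∞) ⊆ cell rho1 (j : ℕ∞)

/-- Strict LM preference. -/
def LMlt {P : Type u} (rho1 rho2 : Val P → ℕ∞) : Prop :=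
  LMle rho1 rho2 ∧ ¬ LMle rho2 rho1

/-- Pointwise minimum rank over a set of ranked interpretations. -/
noncomputable def munion {P : Type u} (Ms : Set (RankedInterp P)) (v : Val P) : ℕ∞ :=
  ⨅ R ∈ Ms, R.rk v

/-- The ranked union of a set of ranked interpretations: finite minimum ranks
are relabelled order-isomorphically onto an initial segment of `ℕ`. -/
noncomputable def rankedUnion {P : Type u} (Ms : Set (RankedInterp P)) : Val P → ℕ∞ :=
  fun v =>
    if munion Ms v = ⊤ then ⊤
    else (({x : ℕ∞ | (∃ u, munion Ms u = x) ∧ x < munion Ms v}.ncard : ℕ) : ℕ∞)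

/-!
The ranked union is the pointwise minimum rank `munion`, relabelled onto an initial segment of
`ℕ`. The relabelling preserves the strict order and the infinite rank, so it satisfies every
propositional conditional that `munion` satisfies; and `munion` satisfies every conditional of `C`,
since a `munion`-minimal `a`-world of rank `r` is already minimal in a model attaining `r` there.
Finally the relabelled rank lies pointwise below every member `R`, so at the first finite rank
where the cells differ, the cell of the ranked union can only have grown: this is `≺_LM`.
-/

section SatR

variable {P : Type u}

theorem satR_congr_of_isProp (rho sigma : Val P → ℕ∞) (v : Val P) {a : PTL P}
    (ha : a.IsProp) : satR rho v a ↔ satR sigma v a := by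
  induction a with
  | atom _ => rfl
  | neg a ih => exact not_congr (ih ha)
  | conj a b iha ihb => exact and_congr (iha ha.1) (ihb ha.2)
  | top => rfl
  | bot => rfl
  | typ a _ => exact ha.elim

theorem condSatRho_of_lt_imp_lt {rho sigma : Val P → ℕ∞} {a b : PTL P}
    (hlt : ∀ u v, rho u < rho v → sigma u < sigma v) (htop : ∀ v, rho v = ⊤ → sigma v = ⊤)
    (ha : a.IsProp) (hb : b.IsProp) (h : condSatRho rho a b) : condSatRho sigma a b := by
  intro v hv hva hmin
  refine (satR_congr_of_isProp _ _ v hb).mp (h v (lt_top_iff_ne_top.mpr (mt (htop v) hv.ne))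
    ((satR_congr_of_isProp _ _ v ha).mp hva) fun u _ hua hu => ?_)
  exact hmin u ((hlt u v hu).trans hv) ((satR_congr_of_isProp _ _ u ha).mp hua) (hlt u v hu)

end SatR

section Cells

variable {P : Type u} {rho sigma : Val P → ℕ∞}

theorem eq_of_forall_cell_coe_eq (h : ∀ j : ℕ, cell rho j = cell sigma j) : rho = sigma := by
  funext v
  have hcell (n : ℕ) : rho v = n ↔ sigma v = n := Set.ext_iff.mp (h n) v
  induction hv : rho v using ENat.recTopCoe with
  | top =>
    induction hw : sigma v using ENat.recTopCoe with
    | top => rfl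
    | coe n => simp [(hcell n).mpr hw] at hv
  | coe n => exact ((hcell n).mp hv).symm

theorem LMle_of_le (hle : ∀ v, rho v ≤ sigma v) : LMle rho sigma := by
  by_cases hall : ∀ j : ℕ, cell rho j = cell sigma j
  · exact Or.inl fun _ => by rw [eq_of_forall_cell_coe_eq hall]
  push Not at hall
  refine Or.inr ⟨Nat.find hall, fun k hk => not_not.mp (Nat.find_min hall hk),
    Nat.find_spec hall, fun v hv => ?_⟩
  obtain ⟨k, hk⟩ := ENat.ne_top_iff_exists.mp ((hle v).trans_lt (hv ▸ ENat.natCast_lt_top _)).ne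
  have hkle : k ≤ Nat.find hall := by exact_mod_cast hk ▸ hv ▸ hle v
  rcases hkle.lt_or_eq with hlt | rfl
  · have hmem : v ∈ cell rho k := hk.symm
    rw [not_not.mp (Nat.find_min hall hlt)] at hmem
    exact absurd (hmem.symm.trans hv) (by exact_mod_cast hlt.ne)
  · exact hk.symm

theorem eq_of_LMle_of_LMle (h₁ : LMle rho sigma) (h₂ : LMle sigma rho) : rho = sigma := by
  rcases h₁ with hall | ⟨j, hbelow, hne, hsub⟩
  · exact eq_of_forall_cell_coe_eq fun j => hall j
  rcases h₂ with hall | ⟨j', hbelow', hne', hsub'⟩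
  · exact eq_of_forall_cell_coe_eq fun j => (hall j).symm
  exfalso
  rcases lt_trichotomy j j' with hlt | rfl | hlt
  · exact hne (hbelow' j hlt).symm
  · exact hne (hsub'.antisymm hsub)
  · exact hne' (hbelow j' hlt).symm

theorem LMlt_of_le_of_ne (hle : ∀ v, rho v ≤ sigma v) (hne : sigma ≠ rho) : LMlt rho sigma :=
  ⟨LMle_of_le hle, fun h => hne (eq_of_LMle_of_LMle h (LMle_of_le hle))⟩

end Cells

noncomputable def relabelRanks {α : Type*} (m : α → ℕ∞) (v : α) : ℕ∞ :=
  if m v = ⊤ then ⊤ else ((Set.range m ∩ Set.Iio (m v)).ncard : ℕ∞)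

section Relabel

variable {α : Type*} {m : α → ℕ∞}

theorem relabelRanks_of_ne_top {v : α} (hv : m v ≠ ⊤) :
    relabelRanks m v = ((Set.range m ∩ Set.Iio (m v)).ncard : ℕ∞) :=
  if_neg hv

theorem relabelRanks_eq_top_iff {v : α} : relabelRanks m v = ⊤ ↔ m v = ⊤ := by
  unfold relabelRanks
  split_ifs <;> simp_all

theorem finite_range_inter_Iio {v : α} (hv : m v ≠ ⊤) :
    (Set.range m ∩ Set.Iio (m v)).Finite :=
  ENat.finite_of_sSup_lt_top ((sSup_le fun _ hx => hx.2.le).trans_lt hv.lt_top)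

theorem relabelRanks_lt_relabelRanks {u v : α} (h : m u < m v) :
    relabelRanks m u < relabelRanks m v := by
  by_cases hv : m v = ⊤
  · rw [relabelRanks_eq_top_iff.mpr hv, lt_top_iff_ne_top, Ne, relabelRanks_eq_top_iff]
    exact h.ne_top
  rw [relabelRanks_of_ne_top hv, relabelRanks_of_ne_top h.ne_top]
  refine Nat.cast_lt.mpr (Set.ncard_lt_ncard ?_ (finite_range_inter_Iio hv))
  refine Set.ssubset_iff_of_subset (Set.inter_subset_inter_right _ (Set.Iio_subset_Iio h.le))
    |>.mpr ⟨m u, ⟨⟨u, rfl⟩, h⟩, fun hu => lt_irrefl (m u) hu.2⟩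

theorem relabelRanks_le (v : α) : relabelRanks m v ≤ m v := by
  by_cases hv : m v = ⊤
  · simp [hv]
  obtain ⟨n, hn⟩ := ENat.ne_top_iff_exists.mp hv
  rw [relabelRanks_of_ne_top hv, ← hn, Nat.cast_le]
  calc (Set.range m ∩ Set.Iio (n : ℕ∞)).ncard ≤ ((↑) '' Set.Iio n : Set ℕ∞).ncard := by
        refine Set.ncard_le_ncard (fun x hx => ?_) ((Set.finite_Iio n).image _)
        obtain ⟨k, rfl⟩ := ENat.ne_top_iff_exists.mp (hx.2.trans_le le_top).ne
        exact ⟨k, Set.mem_Iio.mpr (by exact_mod_cast Set.mem_Iio.mp hx.2), rfl⟩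
    _ = n := by rw [Set.ncard_image_of_injective _ Nat.cast_injective, ← Finset.coe_Iio,
      Set.ncard_coe_finset, Nat.card_Iio]

theorem exists_relabelRanks_eq_of_eq_succ {v : α} {i : ℕ} (hv : relabelRanks m v = (i + 1 : ℕ)) :
    ∃ u, relabelRanks m u = i := by
  have hm : m v ≠ ⊤ := fun h => by
    rw [relabelRanks_eq_top_iff.mpr h] at hv
    exact ENat.top_ne_natCast _ hv
  set T := Set.range m ∩ Set.Iio (m v)
  have hcard : T.ncard = i + 1 := by exact_mod_cast (relabelRanks_of_ne_top hm).symm.trans hv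
  have hmax : sSup T ∈ T :=
    (Set.nonempty_of_ncard_ne_zero (by omega)).csSup_mem (finite_range_inter_Iio hm)
  obtain ⟨⟨u, hu⟩, hlt⟩ := id hmax
  have hTu : Set.range m ∩ Set.Iio (m u) = T \ {sSup T} := by
    ext y
    simp only [hu, T, Set.mem_sdiff, Set.mem_inter_iff, Set.mem_Iio, Set.mem_singleton_iff]
    exact ⟨fun ⟨hy, hyx⟩ => ⟨⟨hy, hyx.trans hlt⟩, hyx.ne⟩,
      fun ⟨hyT, hyx⟩ => ⟨hyT.1, (le_sSup (show y ∈ T from hyT)).lt_of_ne hyx⟩⟩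
  refine ⟨u, ?_⟩
  rw [relabelRanks_of_ne_top (hu ▸ hlt.ne_top), hTu, Set.ncard_sdiff_singleton_of_mem hmax, hcard]
  simp

theorem rkConvex_relabelRanks {P : Type u} (m : Val P → ℕ∞) : RkConvex (relabelRanks m) := by
  intro v i hv j hj
  induction i generalizing v with
  | zero => omega
  | succ i ih =>
    obtain ⟨u, hu⟩ := exists_relabelRanks_eq_of_eq_succ hv
    rcases Nat.lt_succ_iff_lt_or_eq.mp hj with hj | rfl
    exacts [ih u hu hj, ⟨u, hu⟩]

end Relabel

section RankedUnion

variable {P : Type u} {Ms : Set (RankedInterp P)}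

theorem rankedUnion_eq_relabelRanks : rankedUnion Ms = relabelRanks (munion Ms) := rfl

theorem munion_le {R : RankedInterp P} (hR : R ∈ Ms) (v : Val P) : munion Ms v ≤ R.rk v :=
  iInf₂_le R hR

theorem exists_rk_eq_munion {v : Val P} (hv : munion Ms v ≠ ⊤) :
    ∃ R ∈ Ms, R.rk v = munion Ms v := by
  rcases Ms.eq_empty_or_nonempty with rfl | hne
  · simp [munion] at hv
  rw [munion, ← sInf_image]
  exact csInf_mem (hne.image _)

theorem condSatRho_munion {a b : PTL P} (ha : a.IsProp) (hb : b.IsProp)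
    (hmod : ∀ R ∈ Ms, condSatRho R.rk a b) : condSatRho (munion Ms) a b := by
  intro v hv hva hmin
  obtain ⟨R, hR, hRv⟩ := exists_rk_eq_munion hv.ne
  refine (satR_congr_of_isProp _ _ v hb).mp (hmod R hR v (hRv ▸ hv)
    ((satR_congr_of_isProp _ _ v ha).mp hva) fun u _ hua hlt => ?_)
  have hu : munion Ms u < munion Ms v := (munion_le hR u).trans_lt (hRv ▸ hlt)
  exact hmin u (hu.trans hv) ((satR_congr_of_isProp _ _ u ha).mp hua) hu

end RankedUnion

theorem ptl_ranked_union_model_general {P : Type u}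
    (C : Set (PTL P × PTL P)) (hprop : ∀ c ∈ C, c.1.IsProp ∧ c.2.IsProp)
    (Ms : Set (RankedInterp P))
    (hmod : ∀ R ∈ Ms, ∀ c ∈ C, condSatRho R.rk c.1 c.2) :
    RkConvex (rankedUnion Ms) ∧
    (∀ c ∈ C, condSatRho (rankedUnion Ms) c.1 c.2) ∧
    (∀ R ∈ Ms, R.rk ≠ rankedUnion Ms → LMlt (rankedUnion Ms) R.rk) := by
  rw [rankedUnion_eq_relabelRanks]
  refine ⟨rkConvex_relabelRanks _, fun c hc => ?_, fun R hR hne => ?_⟩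
  · obtain ⟨ha, hb⟩ := hprop c hc
    exact condSatRho_of_lt_imp_lt (fun _ _ => relabelRanks_lt_relabelRanks)
      (fun _ => relabelRanks_eq_top_iff.mpr) ha hb (condSatRho_munion ha hb (hmod · · c hc))
  · exact LMlt_of_le_of_ne (fun v => (relabelRanks_le v).trans (munion_le hR v)) hne

/-- the ranked union of a finite nonempty set of ranked models
of a satisfiable set of conditionals `C` is a ranked interpretation and a
ranked model of `C`, and is strictly LM-preferred to every other member. -/
theorem ptl_ranked_union_model {P : Type u} [Fintype P] [DecidableEq P]
    (C : Set (PTL P × PTL P)) (hprop : ∀ c ∈ C, c.1.IsProp ∧ c.2.IsProp)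
    (hsat : ∃ R : RankedInterp P, (∃ v, R.rk v < ⊤) ∧
      ∀ c ∈ C, condSatRho R.rk c.1 c.2)
    (Ms : Set (RankedInterp P)) (hfin : Ms.Finite) (hne : Ms.Nonempty)
    (hmod : ∀ R ∈ Ms, ∀ c ∈ C, condSatRho R.rk c.1 c.2) :
    RkConvex (rankedUnion Ms) ∧
    (∀ c ∈ C, condSatRho (rankedUnion Ms) c.1 c.2) ∧
    (∀ R ∈ Ms, R.rk ≠ rankedUnion Ms → LMlt (rankedUnion Ms) R.rk) :=
  ptl_ranked_union_model_general C hprop Ms hmod
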